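/- If G is a subcubic simple graph without isolated vertices satisfying ν_ac(G) < (n(G) − κ_G(K_{2,3}) − κ_G(K_4^+) − 2·κ_G(K_{3,3}))/4 and G has minimum order among all such graphs, then no two vertices of degree 1 in G have a common neighbor. -/

import Mathlib

/-
Let `u, v` be leaves at a common neighbour `w` of a minimum counterexample `G`. If a set `D`
contains `u`, `w` and all but at most one neighbour of `w`, every acyclic matching of `G - D`
extends by the edge `uw`, so `ν_ac` drops by at least one. If moreover `|D|` plus the increase of
`κ(K_{2,3}) + κ(K_4^+) + 2 κ(K_{3,3})` is at most `4`, then `G - D` is a smaller counterexample.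
If every neighbour of `w` is a leaf, take for `D` the star `N[w]` (at most four vertices, a whole
component). Otherwise `N(w) = {u, v, x}` with `x` not a leaf, and `D = {u, v, w}`: the only new
component of `G - D` is the one of `x`, where `x` has degree at most `2`, so it is not `K_{3,3}`
and it adds at most one to the correction term.
-/

open SimpleGraph

/-- `K4plus` is the graph obtained from `K_4` (on vertices 0,1,2,3) by subdividing
the edge between 0 and 1 once, using 4 as the subdivision vertex. -/
def K4plus : SimpleGraph (Fin 5) :=
  SimpleGraph.fromRel (fun a b =>
    (a, b) ∈ ([(0,2),(0,3),(1,2),(1,3),(2,3),(0,4),(1,4)] : List (Fin 5 × Fin 5)))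

/-- The complete bipartite graph `K_{2,3}`. -/
def K23 : SimpleGraph (Fin 2 ⊕ Fin 3) := completeBipartiteGraph (Fin 2) (Fin 3)

/-- The complete bipartite graph `K_{3,3}`. -/
def K33 : SimpleGraph (Fin 3 ⊕ Fin 3) := completeBipartiteGraph (Fin 3) (Fin 3)

/-- A matching `M` in `G` is acyclic if the subgraph of `G` induced by the set of
vertices incident to an edge of `M` is a forest. -/
def IsAcyclicMatching {V : Type*} (G : SimpleGraph V) (M : G.Subgraph) : Prop :=
  M.IsMatching ∧ (G.induce M.support).IsAcyclic

/-- The acyclic matching number of `G`: the maximum number of edges of an acyclic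
matching in `G`. -/
noncomputable def acyclicMatchingNumber {V : Type*} (G : SimpleGraph V) : ℕ :=
  sSup {k | ∃ M : G.Subgraph, IsAcyclicMatching G M ∧ M.edgeSet.ncard = k}

/-- `kappa G H` is the number of connected components of `G` whose induced subgraph
is isomorphic to `H`. -/
noncomputable def kappa {V W : Type*} (G : SimpleGraph V) (H : SimpleGraph W) : ℕ :=
  Nat.card {c : G.ConnectedComponent // Nonempty ((G.induce c.supp) ≃g H)}

/-- A graph is subcubic if every vertex has degree at most 3. -/
def Subcubic {V : Type*} (G : SimpleGraph V) : Prop :=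
  ∀ v, (G.neighborSet v).ncard ≤ 3

/-- A graph has no isolated vertices if every vertex has a neighbor. -/
def NoIsolatedVerts {V : Type*} (G : SimpleGraph V) : Prop :=
  ∀ v, ∃ w, G.Adj v w

/-- The lower bound `(n(G) - κ_G(K_{2,3}) - κ_G(K_4^+) - 2 κ_G(K_{3,3}))/4`. -/
noncomputable def acmBound {V : Type*} [Fintype V] (G : SimpleGraph V) : ℚ :=
  ((Fintype.card V : ℚ) - kappa G K23 - kappa G K4plus - 2 * kappa G K33) / 4

/-- `G` is a counterexample of minimum order to the bound
`ν_ac(G) ≥ (n(G) - κ_G(K_{2,3}) - κ_G(K_4^+) - 2 κ_G(K_{3,3}))/4`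
among subcubic graphs without isolated vertices. -/
def IsMinCounterexample {V : Type} [Fintype V] (G : SimpleGraph V) : Prop :=
  Subcubic G ∧ NoIsolatedVerts G ∧ (acyclicMatchingNumber G : ℚ) < acmBound G ∧
  ∀ (W : Type) [Fintype W] (H : SimpleGraph W),
    Subcubic H → NoIsolatedVerts H → (acyclicMatchingNumber H : ℚ) < acmBound H →
    Fintype.card V ≤ Fintype.card W

namespace SimpleGraph

variable {V W : Type*} {G : SimpleGraph V}

noncomputable def induceInduceIso (s : Set V) (t : Set s) :
    (G.induce s).induce t ≃g G.induce (Subtype.val '' t) where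
  toEquiv := (Equiv.Set.image Subtype.val t Subtype.val_injective).trans (Equiv.setCongr rfl)
  map_rel_iff' := Iff.rfl

lemma ncard_neighborSet_le_of_embedding [Finite W] {G' : SimpleGraph W} (f : G ↪g G') (v : V) :
    (G.neighborSet v).ncard ≤ (G'.neighborSet (f v)).ncard := by
  rw [← Nat.card_coe_set_eq, ← Nat.card_coe_set_eq]
  exact Nat.card_le_card_of_injective _ (f.mapNeighborSet v).injective

lemma ncard_neighborSet_induce_lt [Finite V] {s : Set V} {a : s} {w : V} (hw : G.Adj a w)
    (hws : w ∉ s) : ((G.induce s).neighborSet a).ncard < (G.neighborSet a).ncard := by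
  rw [neighborSet_induce, ← Set.ncard_image_of_injective _ Subtype.val_injective,
    Set.image_preimage_eq_inter_range, Subtype.range_coe]
  exact Set.ncard_lt_ncard ⟨Set.inter_subset_left, fun h => hws (h hw).2⟩ (Set.toFinite _)

lemma _root_.Subcubic.induce [Finite V] (h : Subcubic G) (s : Set V) :
    Subcubic (G.induce s) :=
  fun a => (ncard_neighborSet_le_of_embedding (Embedding.induce s) a).trans (h a)

lemma neighborSet_eq_singleton_of_ncard_eq_one {u w : V} (h : (G.neighborSet u).ncard = 1)
    (huw : G.Adj u w) : G.neighborSet u = {w} := by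
  obtain ⟨a, ha⟩ := Set.ncard_eq_one.mp h
  have hw : w ∈ G.neighborSet u := huw
  rw [ha, Set.mem_singleton_iff] at hw
  rw [ha, hw]

lemma IsAcyclic.induce_insert {A : Set V} {v : V} (hA : (G.induce A).IsAcyclic)
    (hv : (G.neighborSet v ∩ A).Subsingleton) : (G.induce (insert v A)).IsAcyclic := by
  intro z c hc
  set c' := c.map (Embedding.induce (insert v A)).toHom
  have hc' : c'.IsCycle := hc.map Subtype.val_injective
  have hsupp : ∀ y ∈ c'.support, y ∈ insert v A := by
    intro y hy
    rw [Walk.support_map, List.mem_map] at hy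
    obtain ⟨y', -, rfl⟩ := hy
    exact y'.2
  by_cases hvc : v ∈ c'.support
  · -- a cycle through `v` uses two distinct neighbours of `v`, both in `A`
    obtain ⟨a, b, hab, hnbr⟩ := Set.ncard_eq_two.mp (hc'.ncard_neighborSet_toSubgraph_eq_two hvc)
    have hsub : c'.toSubgraph.neighborSet v ⊆ G.neighborSet v ∩ A := by
      intro y hy
      have hvy : G.Adj v y := c'.toSubgraph.adj_sub hy
      refine ⟨hvy, (Set.mem_insert_iff.mp (hsupp y ?_)).resolve_left hvy.ne'⟩
      exact (Walk.mem_verts_toSubgraph c').mp (c'.toSubgraph.edge_vert hy.symm)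
    rw [hnbr] at hsub
    exact hab (hv (hsub (by simp)) (hsub (by simp)))
  · have hsuppA : ∀ y ∈ c'.support, y ∈ A := fun y hy =>
      (Set.mem_insert_iff.mp (hsupp y hy)).resolve_left (by rintro rfl; exact hvc hy)
    refine hA (c'.induce A hsuppA) ?_
    rw [← Walk.isCycle_map_iff_of_injective (f := (Embedding.induce A).toHom) Subtype.val_injective,
      Walk.map_induce]
    exact hc'

end SimpleGraph

instance : DecidableRel K4plus.Adj := fun _ _ => by
  unfold K4plus; exact inferInstanceAs (Decidable (_ ∧ _))

instance : DecidableRel K23.Adj := fun _ _ => by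
  unfold K23 completeBipartiteGraph; infer_instance

instance : DecidableRel K33.Adj := fun _ _ => by
  unfold K33 completeBipartiteGraph; infer_instance

lemma ncard_neighborSet_K33 (z : Fin 3 ⊕ Fin 3) : (K33.neighborSet z).ncard = 3 := by
  rw [← Nat.card_coe_set_eq, Nat.card_eq_fintype_card, card_neighborSet_eq_degree]
  revert z
  decide

lemma isEmpty_iso_K23_K4plus : IsEmpty (K23 ≃g K4plus) :=
  ⟨fun e => absurd e.card_edgeFinset_eq (by decide)⟩

section AcyclicMatching

variable {V : Type*} {G : SimpleGraph V}

lemma isAcyclicMatching_bot : IsAcyclicMatching G ⊥ :=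
  ⟨fun _ hv => hv.elim, fun ⟨_, _, h⟩ => h.elim⟩

lemma bddAbove_acyclicMatchingSizes [Finite V] :
    BddAbove {k | ∃ M : G.Subgraph, IsAcyclicMatching G M ∧ M.edgeSet.ncard = k} := by
  refine ⟨Nat.card (Sym2 V), ?_⟩
  rintro k ⟨M, -, rfl⟩
  rw [← Set.ncard_univ]
  exact Set.ncard_le_ncard (Set.subset_univ _)

lemma exists_isAcyclicMatching_ncard_eq [Finite V] :
    ∃ M : G.Subgraph, IsAcyclicMatching G M ∧ M.edgeSet.ncard = acyclicMatchingNumber G :=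
  Nat.sSup_mem (s := {k | ∃ M : G.Subgraph, IsAcyclicMatching G M ∧ M.edgeSet.ncard = k})
    ⟨0, ⊥, isAcyclicMatching_bot, by simp⟩ bddAbove_acyclicMatchingSizes

lemma IsAcyclicMatching.ncard_le [Finite V] {M : G.Subgraph} (hM : IsAcyclicMatching G M) :
    M.edgeSet.ncard ≤ acyclicMatchingNumber G :=
  le_csSup bddAbove_acyclicMatchingSizes ⟨M, hM, rfl⟩

lemma IsAcyclicMatching.map_induce {s : Set V} {M : (G.induce s).Subgraph}
    (hM : IsAcyclicMatching (G.induce s) M) :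
    IsAcyclicMatching G (M.map (Embedding.induce s).toHom) := by
  have hmatch := hM.1.map (Embedding.induce s).toHom Subtype.val_injective
  refine ⟨hmatch, ?_⟩
  rw [hmatch.support_eq_verts, Subgraph.map_verts, ← hM.1.support_eq_verts]
  exact hM.2.embedding (induceInduceIso s M.support).symm.toEmbedding

lemma IsAcyclicMatching.sup_subgraphOfAdj {M : G.Subgraph} (hM : IsAcyclicMatching G M)
    {u w : V} (huw : G.Adj u w) (hu : u ∉ M.support) (hw : w ∉ M.support)
    (hu' : ∀ y ∈ M.support, ¬ G.Adj u y) (hw' : (G.neighborSet w ∩ M.support).Subsingleton) :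
    IsAcyclicMatching G (M ⊔ G.subgraphOfAdj huw) := by
  have hmatch : (M ⊔ G.subgraphOfAdj huw).IsMatching := by
    refine hM.1.sup (.subgraphOfAdj huw) ?_
    rw [support_subgraphOfAdj, Set.disjoint_insert_right, Set.disjoint_singleton_right]
    exact ⟨hu, hw⟩
  have hsupp : (M ⊔ G.subgraphOfAdj huw).support = insert u (insert w M.support) := by
    rw [hmatch.support_eq_verts, Subgraph.verts_sup, subgraphOfAdj_verts,
      ← hM.1.support_eq_verts, Set.union_comm, Set.insert_union, Set.singleton_union]
  refine ⟨hmatch, ?_⟩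
  rw [hsupp]
  refine (hM.2.induce_insert hw').induce_insert (Set.subsingleton_singleton (a := w) |>.anti ?_)
  rintro y ⟨hy, rfl | hyM⟩
  · rfl
  · exact absurd hy (hu' y hyM)

lemma ncard_edgeSet_sup_subgraphOfAdj [Finite V] {M : G.Subgraph} {u w : V} (huw : G.Adj u w)
    (hu : u ∉ M.support) :
    (M ⊔ G.subgraphOfAdj huw).edgeSet.ncard = M.edgeSet.ncard + 1 := by
  rw [Subgraph.edgeSet_sup, edgeSet_subgraphOfAdj, Set.union_singleton,
    Set.ncard_insert_of_notMem (a := s(u, w)) fun h => hu ⟨w, h⟩]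

lemma acyclicMatchingNumber_induce_add_one_le [Finite V] {s : Set V} {u w : V}
    (huw : G.Adj u w) (hu : u ∉ s) (hw : w ∉ s) (hu' : ∀ y ∈ s, ¬ G.Adj u y)
    (hw' : (G.neighborSet w ∩ s).Subsingleton) :
    acyclicMatchingNumber (G.induce s) + 1 ≤ acyclicMatchingNumber G := by
  obtain ⟨M, hM, hcard⟩ := exists_isAcyclicMatching_ncard_eq (G := G.induce s)
  set M' := M.map (Embedding.induce s).toHom
  have hM's : M'.support ⊆ s := fun y hy => by
    obtain ⟨y', -, rfl⟩ := M'.support_subset_verts hy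
    exact y'.2
  calc acyclicMatchingNumber (G.induce s) + 1 = M'.edgeSet.ncard + 1 := by
        rw [Subgraph.edgeSet_map,
          Set.ncard_image_of_injective (f := Sym2.map (Embedding.induce s).toHom) _
            (Sym2.map.injective Subtype.val_injective), hcard]
    _ = (M' ⊔ G.subgraphOfAdj huw).edgeSet.ncard :=
        (ncard_edgeSet_sup_subgraphOfAdj huw fun h => hu (hM's h)).symm
    _ ≤ acyclicMatchingNumber G :=
        (hM.map_induce.sup_subgraphOfAdj huw (fun h => hu (hM's h)) (fun h => hw (hM's h))
          (fun y hy => hu' y (hM's hy))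
          (hw'.anti (Set.inter_subset_inter_right _ hM's))).ncard_le

end AcyclicMatching

section Components

variable {V W : Type*} {G : SimpleGraph V}

lemma kappa_eq_ncard (G : SimpleGraph V) (T : SimpleGraph W) :
    kappa G T = {c : G.ConnectedComponent | Nonempty (c.toSimpleGraph ≃g T)}.ncard :=
  (Nat.card_coe_set_eq _)

lemma SimpleGraph.Reachable.mem_of_adj_closed {C : Set V} (hC : ∀ a ∈ C, ∀ b, G.Adj a b → b ∈ C)
    {a b : V} (hab : G.Reachable a b) (ha : a ∈ C) : b ∈ C := by
  obtain ⟨p⟩ := hab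
  induction p with
  | nil => exact ha
  | cons h _ ih => exact ih (hC _ ha _ h)

lemma SimpleGraph.ConnectedComponent.supp_map_induce {s : Set V}
    (c : (G.induce s).ConnectedComponent)
    (hc : ∀ a ∈ Subtype.val '' c.supp, ∀ b, G.Adj a b → b ∈ Subtype.val '' c.supp) :
    (c.map (Embedding.induce s).toHom).supp = Subtype.val '' c.supp := by
  induction c using ConnectedComponent.ind with | h a => ?_
  ext z
  rw [ConnectedComponent.map_mk, ConnectedComponent.mem_supp_iff, ConnectedComponent.eq]
  constructor
  · intro hz
    exact hz.symm.mem_of_adj_closed hc ⟨a, rfl, rfl⟩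
  · rintro ⟨b, hb, rfl⟩
    exact (ConnectedComponent.eq.mp hb).map (Embedding.induce s).toHom

lemma image_supp_adj_closed {s : Set V} {x : V} (hs : ∀ a ∈ s, ∀ b, G.Adj a b → b ∈ s ∨ a = x)
    {c : (G.induce s).ConnectedComponent} (hx : x ∉ Subtype.val '' c.supp) :
    ∀ a ∈ Subtype.val '' c.supp, ∀ b, G.Adj a b → b ∈ Subtype.val '' c.supp := by
  rintro _ ⟨a, ha, rfl⟩ b hab
  rcases hs a a.2 b hab with hb | rfl
  · exact ⟨⟨b, hb⟩, (c.mem_supp_congr_adj (v := a) (w := ⟨b, hb⟩) hab).mp ha, rfl⟩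
  · exact absurd ⟨a, ha, rfl⟩ hx

lemma SimpleGraph.ConnectedComponent.eq_of_mem_image_supp {s : Set V} {x : V}
    {c c' : (G.induce s).ConnectedComponent} (h : x ∈ Subtype.val '' c.supp)
    (h' : x ∈ Subtype.val '' c'.supp) : c = c' := by
  obtain ⟨a, ha, rfl⟩ := h
  obtain ⟨a', ha', hax⟩ := h'
  exact ConnectedComponent.eq_of_common_vertex ha (Subtype.ext hax ▸ ha')

variable [Finite V]

lemma SimpleGraph.ConnectedComponent.isEmpty_iso_K33 (c : G.ConnectedComponent)
    {a : V} (ha : a ∈ c.supp) (h : (G.neighborSet a).ncard < 3) :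
    IsEmpty (c.toSimpleGraph ≃g K33) := by
  refine ⟨fun e => ?_⟩
  have h33 := ncard_neighborSet_le_of_embedding e.symm.toEmbedding (e ⟨a, ha⟩)
  have hc := ncard_neighborSet_le_of_embedding (Embedding.induce (G := G) c.supp) ⟨a, ha⟩
  rw [ncard_neighborSet_K33] at h33
  simp only [RelIso.coe_toRelEmbedding, RelIso.symm_apply_apply] at h33
  exact absurd (h33.trans hc) (by simpa using h)

lemma ncard_setOf_iso_notMem_le_kappa {s : Set V} {x : V}
    (hs : ∀ a ∈ s, ∀ b, G.Adj a b → b ∈ s ∨ a = x) (T : SimpleGraph W) :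
    {c : (G.induce s).ConnectedComponent |
      Nonempty (c.toSimpleGraph ≃g T) ∧ x ∉ Subtype.val '' c.supp}.ncard ≤ kappa G T := by
  rw [kappa_eq_ncard]
  refine Set.ncard_le_ncard_of_injOn (·.map (Embedding.induce s).toHom) ?_ ?_ (Set.toFinite _)
  · rintro c ⟨⟨e⟩, hx⟩
    refine ⟨?_⟩
    change G.induce (c.map (Embedding.induce s).toHom).supp ≃g T
    rw [c.supp_map_induce (image_supp_adj_closed hs hx)]
    exact (induceInduceIso s c.supp).symm.trans e
  · rintro c ⟨-, hx⟩ c' ⟨-, hx'⟩ h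
    simp only at h
    rw [← ConnectedComponent.supp_inj, ← Set.image_injective.mpr Subtype.val_injective |>.eq_iff,
      ← c.supp_map_induce (image_supp_adj_closed hs hx),
      ← c'.supp_map_induce (image_supp_adj_closed hs hx'), h]

lemma kappa_induce_le {s : Set V} {x : V} (hs : ∀ a ∈ s, ∀ b, G.Adj a b → b ∈ s ∨ a = x)
    {T : SimpleGraph W}
    (hT : ∀ c : (G.induce s).ConnectedComponent, x ∈ Subtype.val '' c.supp →
      IsEmpty (c.toSimpleGraph ≃g T)) :
    kappa (G.induce s) T ≤ kappa G T := by
  refine le_of_eq_of_le ?_ (ncard_setOf_iso_notMem_le_kappa hs T)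
  rw [kappa_eq_ncard]
  congr 1
  ext c
  exact ⟨fun ⟨e⟩ => ⟨⟨e⟩, fun hx => (hT c hx).false e⟩, fun h => h.1⟩

lemma kappa_induce_le_add_one {s : Set V} {x : V}
    (hs : ∀ a ∈ s, ∀ b, G.Adj a b → b ∈ s ∨ a = x) (T : SimpleGraph W) :
    kappa (G.induce s) T ≤ kappa G T + 1 := by
  have hx : {c : (G.induce s).ConnectedComponent | x ∈ Subtype.val '' c.supp}.ncard ≤ 1 := by
    refine (Set.ncard_le_one_iff (Set.toFinite _)).mpr ?_
    exact fun hc hc' => ConnectedComponent.eq_of_mem_image_supp hc hc'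
  calc kappa (G.induce s) T
      ≤ ({c | Nonempty (c.toSimpleGraph ≃g T) ∧ x ∉ Subtype.val '' c.supp} ∪
          {c : (G.induce s).ConnectedComponent | x ∈ Subtype.val '' c.supp}).ncard := by
        rw [kappa_eq_ncard]
        refine Set.ncard_le_ncard (fun c hc => ?_) (Set.toFinite _)
        by_cases hxc : x ∈ Subtype.val '' c.supp
        exacts [Or.inr hxc, Or.inl ⟨hc, hxc⟩]
    _ ≤ kappa G T + 1 :=
        (Set.ncard_union_le _ _).trans (add_le_add (ncard_setOf_iso_notMem_le_kappa hs T) hx)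

end Components

section Counterexample

variable {V : Type*} {G : SimpleGraph V}

noncomputable def exceptionalCount (G : SimpleGraph V) : ℕ :=
  kappa G K23 + kappa G K4plus + 2 * kappa G K33

lemma acmBound_eq [Fintype V] (G : SimpleGraph V) :
    acmBound G = ((Fintype.card V : ℚ) - exceptionalCount G) / 4 := by
  rw [acmBound, exceptionalCount]
  push_cast
  ring

variable [Finite V]

lemma exceptionalCount_induce_le {s : Set V} {x : V}
    (hs : ∀ a ∈ s, ∀ b, G.Adj a b → b ∈ s ∨ a = x) (hx : x ∉ s) :
    exceptionalCount (G.induce s) ≤ exceptionalCount G := by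
  have hT {W : Type} (T : SimpleGraph W) (c : (G.induce s).ConnectedComponent)
      (hxc : x ∈ Subtype.val '' c.supp) : IsEmpty (c.toSimpleGraph ≃g T) := by
    obtain ⟨a, -, rfl⟩ := hxc
    exact absurd a.2 hx
  have h23 := kappa_induce_le hs (hT K23)
  have h4 := kappa_induce_le hs (hT K4plus)
  have h33 := kappa_induce_le hs (hT K33)
  unfold exceptionalCount
  omega

lemma exceptionalCount_induce_le_add_one {s : Set V} {x : V}
    (hs : ∀ a ∈ s, ∀ b, G.Adj a b → b ∈ s ∨ a = x)
    (hx : ∀ a : s, a.val = x → ((G.induce s).neighborSet a).ncard < 3) :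
    exceptionalCount (G.induce s) ≤ exceptionalCount G + 1 := by
  have h33 := kappa_induce_le hs (T := K33) fun c ⟨a, ha, hax⟩ => c.isEmpty_iso_K33 ha (hx a hax)
  have h23 := kappa_induce_le_add_one hs K23
  have h4 := kappa_induce_le_add_one hs K4plus
  unfold exceptionalCount
  by_cases hc : ∃ c : (G.induce s).ConnectedComponent,
      x ∈ Subtype.val '' c.supp ∧ Nonempty (c.toSimpleGraph ≃g K23)
  · obtain ⟨c, hxc, ⟨e⟩⟩ := hc
    have h4' := kappa_induce_le hs (T := K4plus) fun c' hxc' => by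
      obtain rfl := c.eq_of_mem_image_supp hxc hxc'
      exact ⟨fun e' => isEmpty_iso_K23_K4plus.false (e.symm.trans e')⟩
    omega
  · push Not at hc
    have h23' := kappa_induce_le hs hc
    omega

end Counterexample

namespace IsMinCounterexample

variable {V : Type} [Fintype V] {G : SimpleGraph V}

lemma false_of_delete (hG : IsMinCounterexample G) {D : Set V} {u w : V} (huw : G.Adj u w)
    (huD : u ∈ D) (hwD : w ∈ D) (hu : G.neighborSet u ⊆ D)
    (hw : (G.neighborSet w ∩ Dᶜ).Subsingleton) (hiso : NoIsolatedVerts (G.induce Dᶜ))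
    (hcount : exceptionalCount (G.induce Dᶜ) + D.ncard ≤ exceptionalCount G + 4) : False := by
  classical
  obtain ⟨hsub, -, hlt, hmin⟩ := hG
  have hν := acyclicMatchingNumber_induce_add_one_le (s := Dᶜ) huw (not_not_intro huD)
    (not_not_intro hwD) (fun y hy h => hy (hu h)) hw
  have hn : D.ncard + Fintype.card ↥Dᶜ = Fintype.card V := by
    rw [← Nat.card_eq_fintype_card, Nat.card_coe_set_eq, ← Nat.card_eq_fintype_card]
    exact Set.ncard_add_ncard_compl D
  have hD : 0 < D.ncard := (Set.ncard_pos).mpr ⟨u, huD⟩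
  refine absurd (hmin _ (G.induce Dᶜ) (hsub.induce Dᶜ) hiso ?_) (by omega)
  rw [acmBound_eq] at hlt ⊢
  have hν' : (acyclicMatchingNumber (G.induce Dᶜ) : ℚ) + 1 ≤ acyclicMatchingNumber G := by
    exact_mod_cast hν
  have hcount' : (exceptionalCount (G.induce Dᶜ) : ℚ) + D.ncard ≤ exceptionalCount G + 4 := by
    exact_mod_cast hcount
  have hn' : (D.ncard : ℚ) + Fintype.card ↥Dᶜ = Fintype.card V := by exact_mod_cast hn
  linarith

/-- No component of a minimum counterexample is a star. -/
lemma exists_adj_adj_ne (hG : IsMinCounterexample G) (w : V) :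
    ∃ x y, G.Adj w x ∧ G.Adj x y ∧ y ≠ w := by
  by_contra! hstar
  obtain ⟨u, hwu⟩ := hG.2.1 w
  set D := insert w (G.neighborSet w)
  have hclosed : ∀ a ∈ Dᶜ, ∀ b, G.Adj a b → b ∈ Dᶜ := by
    rintro a ha b hab (rfl | hb)
    · exact ha (Or.inr hab.symm)
    · exact ha (Or.inl (hstar b a hb hab.symm))
  refine hG.false_of_delete (D := D) hwu.symm (Or.inr hwu) (Or.inl rfl) ?_ ?_ ?_ ?_
  · intro y hy
    exact Or.inl (hstar u y hwu hy)
  · rintro a ⟨ha, haD⟩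
    exact absurd (Or.inr ha) haD
  · intro a
    obtain ⟨b, hab⟩ := hG.2.1 a
    exact ⟨⟨b, hclosed a a.2 b hab⟩, hab⟩
  · have hD : D.ncard ≤ 4 := (Set.ncard_insert_le _ _).trans (by have := hG.1 w; omega)
    have := exceptionalCount_induce_le (fun a ha b hab => Or.inl (hclosed a ha b hab))
      (not_not_intro (Set.mem_insert w _))
    omega

lemma false_of_two_leaves (hG : IsMinCounterexample G) {u v w x y : V} (huv : u ≠ v)
    (hNu : G.neighborSet u = {w}) (hNv : G.neighborSet v = {w})
    (hNw : G.neighborSet w = {u, v, x}) (hxy : G.Adj x y) (hyw : y ≠ w) : False := by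
  have hleaf {z a : V} (hz : G.neighborSet z = {w}) (h : G.Adj z a) : a = w :=
    (hz ▸ h : a ∈ ({w} : Set V))
  have huw : G.Adj u w := (hNu ▸ rfl : w ∈ G.neighborSet u)
  have hvw : G.Adj v w := (hNv ▸ rfl : w ∈ G.neighborSet v)
  have hwx : G.Adj w x := (hNw ▸ by simp : x ∈ G.neighborSet w)
  set D : Set V := {u, v, w}
  have hyD : y ∉ D := by
    rintro (rfl | rfl | rfl)
    exacts [hwx.ne' (hleaf hNu hxy.symm), hwx.ne' (hleaf hNv hxy.symm), hyw rfl]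
  have hs : ∀ a ∈ Dᶜ, ∀ b, G.Adj a b → b ∈ Dᶜ ∨ a = x := by
    refine fun a ha b hab => or_iff_not_imp_left.mpr fun hb => ?_
    obtain rfl | rfl | rfl := not_not.mp hb
    · exact absurd (Or.inr (Or.inr (hleaf hNu hab.symm))) ha
    · exact absurd (Or.inr (Or.inr (hleaf hNv hab.symm))) ha
    · obtain rfl | rfl | rfl := (hNw ▸ hab.symm : a ∈ ({u, v, x} : Set V))
      exacts [absurd (Or.inl rfl) ha, absurd (Or.inr (Or.inl rfl)) ha, rfl]
  refine hG.false_of_delete (D := D) huw (Or.inl rfl) (Or.inr (Or.inr rfl)) ?_ ?_ ?_ ?_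
  · rw [hNu]
    exact Set.singleton_subset_iff.mpr (Or.inr (Or.inr rfl))
  · refine Set.subsingleton_singleton (a := x) |>.anti ?_
    rintro a ⟨ha, haD⟩
    exact (hs a haD w ha.symm).resolve_left (not_not_intro (Or.inr (Or.inr rfl)))
  · intro a
    by_cases hax : a.val = x
    · exact ⟨⟨y, hyD⟩, (hax ▸ hxy : G.Adj a y)⟩
    · obtain ⟨b, hab⟩ := hG.2.1 a
      exact ⟨⟨b, (hs a a.2 b hab).resolve_right hax⟩, hab⟩
  · have hcount := exceptionalCount_induce_le_add_one hs fun a hax =>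
      (ncard_neighborSet_induce_lt (hax ▸ hwx.symm) (not_not_intro (Or.inr (Or.inr rfl)))).trans_le
        (hG.1 a)
    rw [Set.ncard_eq_three.mpr ⟨u, v, w, huv, huw.ne, hvw.ne, rfl⟩]
    omega

end IsMinCounterexample

/-- In a minimum-order counterexample, no two vertices of degree 1 have a common
neighbor. -/
theorem stmt_4 {V : Type} [Fintype V] (G : SimpleGraph V)
    (hmin : IsMinCounterexample G) :
    ∀ u v w : V, u ≠ v → (G.neighborSet u).ncard = 1 → (G.neighborSet v).ncard = 1 →
      G.Adj u w → G.Adj v w → False := by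
  intro u v w huv hu hv huw hvw
  have hNu := neighborSet_eq_singleton_of_ncard_eq_one hu huw
  have hNv := neighborSet_eq_singleton_of_ncard_eq_one hv hvw
  obtain ⟨x, y, hwx, hxy, hyw⟩ := hmin.exists_adj_adj_ne w
  have hxu : x ≠ u := by rintro rfl; exact hyw (hNu ▸ hxy : y ∈ ({w} : Set V))
  have hxv : x ≠ v := by rintro rfl; exact hyw (hNv ▸ hxy : y ∈ ({w} : Set V))
  have hNw : G.neighborSet w = {u, v, x} := by
    refine (Set.eq_of_subset_of_ncard_le ?_ ?_).symm
    · rintro _ (rfl | rfl | rfl)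
      exacts [huw.symm, hvw.symm, hwx]
    · rw [Set.ncard_eq_three.mpr ⟨u, v, x, huv, hxu.symm, hxv.symm, rfl⟩]
      exact hmin.1 w
  exact hmin.false_of_two_leaves huv hNu hNv hNw hxy hyw
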